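/- arXiv:1904.01895 — 7 statements merged into one kernel-verified Lean document; each statement's English description precedes it below -/
import Mathlib

section
/- There exists a constant c > 0 (depending only on μ, κ and η) such that for every z ∈ [0,1] and all symmetric 2×2 real matrices ε₁, ε₂ one has (∂_εW(z,ε₁) − ∂_εW(z,ε₂)) : (ε₁ − ε₂) ≥ c |ε₁ − ε₂|², where : denotes the Frobenius inner product and |·| the Frobenius norm. (Strong monotonicity of the stress, Lemma 3.1(a).) -/
/-- Volumetric part of a 2×2 real matrix: `F_v = (tr F / 2) • I`. -/
noncomputable def matVol (F : Matrix (Fin 2) (Fin 2) ℝ) : Matrix (Fin 2) (Fin 2) ℝ :=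
  (Matrix.trace F / 2) • (1 : Matrix (Fin 2) (Fin 2) ℝ)

/-- Deviatoric part: `F_d = F - F_v`. -/
noncomputable def matDev (F : Matrix (Fin 2) (Fin 2) ℝ) : Matrix (Fin 2) (Fin 2) ℝ :=
  F - matVol F

/-- Positive volumetric part: `F_v⁺ = ((tr F)₊ / 2) • I`. -/
noncomputable def matVolPos (F : Matrix (Fin 2) (Fin 2) ℝ) : Matrix (Fin 2) (Fin 2) ℝ :=
  (max (Matrix.trace F) 0 / 2) • (1 : Matrix (Fin 2) (Fin 2) ℝ)

/-- Negative volumetric part: `F_v⁻ = ((tr F)₋ / 2) • I`. -/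
noncomputable def matVolNeg (F : Matrix (Fin 2) (Fin 2) ℝ) : Matrix (Fin 2) (Fin 2) ℝ :=
  (max (-Matrix.trace F) 0 / 2) • (1 : Matrix (Fin 2) (Fin 2) ℝ)

/-- Frobenius inner product `A : B = ∑ᵢⱼ Aᵢⱼ Bᵢⱼ`. -/
def frobInner (A B : Matrix (Fin 2) (Fin 2) ℝ) : ℝ := ∑ i, ∑ j, A i j * B i j

/-- Frobenius norm. -/
noncomputable def frobNorm (A : Matrix (Fin 2) (Fin 2) ℝ) : ℝ := Real.sqrt (frobInner A A)

/-- The stress `∂_εW(z,ε) = 2h(z)(μ ε_d + κ ε_v⁺) − 2κ ε_v⁻`. -/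
noncomputable def stressW (h : ℝ → ℝ) (μ κ z : ℝ) (ε : Matrix (Fin 2) (Fin 2) ℝ) :
    Matrix (Fin 2) (Fin 2) ℝ :=
  (2 * h z) • (μ • matDev ε + κ • matVolPos ε) - (2 * κ) • matVolNeg ε

/-- Scalar monotonicity of the volumetric response. -/
lemma vol_monotone (κ η H t1 t2 : ℝ) (hκ : 0 < κ) (hη : 0 < η) (hH : η ≤ H) :
    κ * min η 1 / 2 * (t1 - t2) ^ 2 ≤
      (H * κ * (max t1 0 - max t2 0) - κ * (max (-t1) 0 - max (-t2) 0)) * (t1 - t2) := by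
  have hmη : min η 1 ≤ η := min_le_left _ _
  have hm1 : min η 1 ≤ 1 := min_le_right _ _
  have hm0 : (0:ℝ) < min η 1 := lt_min hη one_pos
  rcases le_total t1 0 with h1 | h1 <;> rcases le_total t2 0 with h2 | h2
  · rw [max_eq_right h1, max_eq_right h2, max_eq_left (by linarith : (0:ℝ) ≤ -t1),
      max_eq_left (by linarith : (0:ℝ) ≤ -t2)]
    nlinarith [mul_nonneg (mul_nonneg hκ.le (sub_nonneg.2 hm1)) (sq_nonneg (t1 - t2)),
      mul_nonneg (mul_nonneg hκ.le hm0.le) (sq_nonneg (t1 - t2))]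
  · rw [max_eq_right h1, max_eq_left h2, max_eq_left (by linarith : (0:ℝ) ≤ -t1),
      max_eq_right (by linarith : -t2 ≤ (0:ℝ))]
    nlinarith [mul_nonneg (mul_nonneg (mul_nonneg hκ.le (sub_nonneg.2 hH)) h2)
        (by linarith : (0:ℝ) ≤ t2 - t1),
      mul_nonneg (mul_nonneg (mul_nonneg hκ.le (sub_nonneg.2 hm1))
        (by linarith : (0:ℝ) ≤ -t1)) (by linarith : (0:ℝ) ≤ t2 - t1),
      mul_nonneg (mul_nonneg (mul_nonneg hκ.le (sub_nonneg.2 hmη)) h2)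
        (by linarith : (0:ℝ) ≤ t2 - t1),
      mul_nonneg (mul_nonneg hκ.le hm0.le) (sq_nonneg (t1 - t2))]
  · rw [max_eq_left h1, max_eq_right h2, max_eq_right (by linarith : -t1 ≤ (0:ℝ)),
      max_eq_left (by linarith : (0:ℝ) ≤ -t2)]
    nlinarith [mul_nonneg (mul_nonneg (mul_nonneg hκ.le (sub_nonneg.2 hH)) h1)
        (by linarith : (0:ℝ) ≤ t1 - t2),
      mul_nonneg (mul_nonneg (mul_nonneg hκ.le (sub_nonneg.2 hm1))
        (by linarith : (0:ℝ) ≤ -t2)) (by linarith : (0:ℝ) ≤ t1 - t2),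
      mul_nonneg (mul_nonneg (mul_nonneg hκ.le (sub_nonneg.2 hmη)) h1)
        (by linarith : (0:ℝ) ≤ t1 - t2),
      mul_nonneg (mul_nonneg hκ.le hm0.le) (sq_nonneg (t1 - t2))]
  · rw [max_eq_left h1, max_eq_left h2, max_eq_right (by linarith : -t1 ≤ (0:ℝ)),
      max_eq_right (by linarith : -t2 ≤ (0:ℝ))]
    nlinarith [mul_nonneg (mul_nonneg hκ.le (by linarith : (0:ℝ) ≤ H - min η 1))
        (sq_nonneg (t1 - t2)),
      mul_nonneg (mul_nonneg hκ.le hm0.le) (sq_nonneg (t1 - t2))]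

set_option maxHeartbeats 1000000 in
/-- Lemma 3.1(a): strong monotonicity of the stress. -/
theorem strong_monotonicity_of_stress
    (μ κ η : ℝ) (hμ : 0 < μ) (hκ : 0 < κ) (hη : 0 < η)
    (h : ℝ → ℝ) (hcont : Continuous h) (hlb : ∀ z : ℝ, η ≤ h z) :
    ∃ c > 0, ∀ z ∈ Set.Icc (0:ℝ) 1, ∀ ε₁ ε₂ : Matrix (Fin 2) (Fin 2) ℝ,
      ε₁.IsSymm → ε₂.IsSymm →
      c * frobNorm (ε₁ - ε₂) ^ 2 ≤
        frobInner (stressW h μ κ z ε₁ - stressW h μ κ z ε₂) (ε₁ - ε₂) := by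
  refine ⟨min (2 * η * μ) (κ * min η 1),
    lt_min (by positivity) (by positivity), ?_⟩
  intro z _ ε₁ ε₂ _ _
  have hH : η ≤ h z := hlb z
  have hc1 : min (2 * η * μ) (κ * min η 1) ≤ 2 * η * μ := min_le_left _ _
  have hc2 : min (2 * η * μ) (κ * min η 1) ≤ κ * min η 1 := min_le_right _ _
  have hsq : frobNorm (ε₁ - ε₂) ^ 2 = frobInner (ε₁ - ε₂) (ε₁ - ε₂) := by
    rw [frobNorm, Real.sq_sqrt]
    unfold frobInner
    apply Finset.sum_nonneg; intro i _; apply Finset.sum_nonneg; intro j _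
    exact mul_self_nonneg _
  rw [hsq]
  simp only [stressW, matDev, matVol, matVolPos, matVolNeg, frobInner,
    Matrix.trace_fin_two, Fin.sum_univ_two, Matrix.sub_apply, Matrix.add_apply,
    Matrix.smul_apply, Matrix.one_apply, smul_eq_mul]
  norm_num
  rw [show -ε₁ 1 1 + -ε₁ 0 0 = -(ε₁ 0 0 + ε₁ 1 1) by ring,
    show -ε₂ 1 1 + -ε₂ 0 0 = -(ε₂ 0 0 + ε₂ 1 1) by ring]
  have C := vol_monotone κ η (h z) (ε₁ 0 0 + ε₁ 1 1) (ε₂ 0 0 + ε₂ 1 1) hκ hη hH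
  have A : min (2 * η * μ) (κ * min η 1) *
      ((ε₁ 0 0 - ε₂ 0 0) * (ε₁ 0 0 - ε₂ 0 0) + (ε₁ 0 1 - ε₂ 0 1) * (ε₁ 0 1 - ε₂ 0 1) +
        ((ε₁ 1 0 - ε₂ 1 0) * (ε₁ 1 0 - ε₂ 1 0) + (ε₁ 1 1 - ε₂ 1 1) * (ε₁ 1 1 - ε₂ 1 1))) ≤
      2 * η * μ * ((ε₁ 0 1 - ε₂ 0 1) ^ 2 + (ε₁ 1 0 - ε₂ 1 0) ^ 2) +
        η * μ * ((ε₁ 0 0 - ε₂ 0 0) - (ε₁ 1 1 - ε₂ 1 1)) ^ 2 +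
        κ * min η 1 / 2 * ((ε₁ 0 0 + ε₁ 1 1) - (ε₂ 0 0 + ε₂ 1 1)) ^ 2 := by
    nlinarith [mul_nonneg (sub_nonneg.2 hc1) (sq_nonneg ((ε₁ 0 0 - ε₂ 0 0) - (ε₁ 1 1 - ε₂ 1 1))),
      mul_nonneg (sub_nonneg.2 hc2) (sq_nonneg ((ε₁ 0 0 + ε₁ 1 1) - (ε₂ 0 0 + ε₂ 1 1))),
      mul_nonneg (sub_nonneg.2 hc1) (sq_nonneg (ε₁ 0 1 - ε₂ 0 1)),
      mul_nonneg (sub_nonneg.2 hc1) (sq_nonneg (ε₁ 1 0 - ε₂ 1 0))]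
  have B : 2 * η * μ * ((ε₁ 0 1 - ε₂ 0 1) ^ 2 + (ε₁ 1 0 - ε₂ 1 0) ^ 2) +
        η * μ * ((ε₁ 0 0 - ε₂ 0 0) - (ε₁ 1 1 - ε₂ 1 1)) ^ 2 ≤
      2 * h z * μ * ((ε₁ 0 1 - ε₂ 0 1) ^ 2 + (ε₁ 1 0 - ε₂ 1 0) ^ 2) +
        h z * μ * ((ε₁ 0 0 - ε₂ 0 0) - (ε₁ 1 1 - ε₂ 1 1)) ^ 2 := by
    nlinarith [mul_nonneg (mul_nonneg (sub_nonneg.2 hH) hμ.le) (sq_nonneg (ε₁ 0 1 - ε₂ 0 1)),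
      mul_nonneg (mul_nonneg (sub_nonneg.2 hH) hμ.le) (sq_nonneg (ε₁ 1 0 - ε₂ 1 0)),
      mul_nonneg (mul_nonneg (sub_nonneg.2 hH) hμ.le)
        (sq_nonneg ((ε₁ 0 0 - ε₂ 0 0) - (ε₁ 1 1 - ε₂ 1 1)))]
  linarith [A, B, C]
end

section
/- Let H be a real Hilbert space, F : H → ℝ Fréchet differentiable with gradient ∇F, and assume ∇F is monotone with constant c ≥ 0, i.e. ⟨∇F(x) − ∇F(y), x − y⟩ ≥ c‖x − y‖² for all x, y ∈ H. If u₁, u₂ : [0,∞) → H are differentiable with uᵢ'(l) = −∇F(uᵢ(l)) for every l ≥ 0, then ‖u₁(l) − u₂(l)‖ ≤ e^{−c l} ‖u₁(0) − u₂(0)‖ for every l ≥ 0; in particular, two gradient-flow solutions with the same initial datum coincide. (Contraction estimate and uniqueness, from the proof of Theorem 4.1.) -/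
/-!
The difference `v = u₁ - u₂` has `v' = ∇F u₂ - ∇F u₁`, so monotonicity of `∇F` gives
`⟪v, v'⟫ ≤ -c‖v‖²`. Hence `g = ‖v‖²` satisfies `g' ≤ -2c g`, and `e^{2cl} g(l)` is antitone.
-/

open Set Real

theorem antitoneOn_exp_mul_of_hasDerivWithinAt_le_neg_mul {D : Set ℝ} (hD : Convex ℝ D)
    {g g' : ℝ → ℝ} {k : ℝ} (hg : ∀ x ∈ D, HasDerivWithinAt g (g' x) D x)
    (hle : ∀ x ∈ D, g' x ≤ -k * g x) :
    AntitoneOn (fun x => exp (k * x) * g x) D := by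
  have hderiv : ∀ x ∈ D, HasDerivWithinAt (fun x => exp (k * x) * g x)
      (k * exp (k * x) * g x + exp (k * x) * g' x) D x := fun x hx => by
    have hexp : HasDerivAt (fun x => exp (k * x)) (exp (k * x) * k) x := by
      simpa using ((hasDerivAt_id x).const_mul k).exp
    exact (hexp.hasDerivWithinAt.fun_mul (hg x hx)).congr_deriv (by ring)
  refine antitoneOn_of_hasDerivWithinAt_nonpos hD
    (fun x hx => (hderiv x hx).continuousWithinAt)
    (fun x hx => (hderiv x (interior_subset hx)).mono interior_subset) fun x hx => ?_
  have hx := interior_subset hx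
  nlinarith [exp_pos (k * x), hle x hx]

theorem norm_le_exp_neg_mul_norm_of_inner_deriv_le {E : Type*} [NormedAddCommGroup E]
    [InnerProductSpace ℝ E] {D : Set ℝ} (hD : Convex ℝ D) {v v' : ℝ → E} {c : ℝ}
    (hv : ∀ x ∈ D, HasDerivWithinAt v (v' x) D x)
    (hdiss : ∀ x ∈ D, inner ℝ (v x) (v' x) ≤ -c * ‖v x‖ ^ 2)
    {a b : ℝ} (ha : a ∈ D) (hb : b ∈ D) (hab : a ≤ b) :
    ‖v b‖ ≤ exp (-(c * (b - a))) * ‖v a‖ := by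
  have hanti := antitoneOn_exp_mul_of_hasDerivWithinAt_le_neg_mul (k := 2 * c) hD
    (fun x hx => (hv x hx).norm_sq) fun x hx => by nlinarith [hdiss x hx]
  have hsq : (exp (c * b) * ‖v b‖) ^ 2 ≤ (exp (c * a) * ‖v a‖) ^ 2 := by
    have hexp_sq : ∀ t r : ℝ, (exp (c * t) * r) ^ 2 = exp (2 * c * t) * r ^ 2 := fun t r => by
      rw [mul_pow, sq (exp _), ← exp_add]; ring_nf
    simpa only [hexp_sq] using hanti ha hb hab
  have hle : exp (c * b) * ‖v b‖ ≤ exp (c * a) * ‖v a‖ :=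
    (pow_le_pow_iff_left₀ (by positivity) (by positivity) two_ne_zero).mp hsq
  rw [show -(c * (b - a)) = c * a - c * b by ring, exp_sub, div_mul_eq_mul_div,
    le_div_iff₀ (exp_pos _)]
  linarith

theorem gradient_flow_contraction_general
    {H : Type*} [NormedAddCommGroup H] [InnerProductSpace ℝ H]
    (gradF : H → H)
    (c : ℝ)
    (hmono : ∀ x y : H, c * ‖x - y‖ ^ 2 ≤ (inner ℝ (gradF x - gradF y) (x - y) : ℝ))
    (u₁ u₂ : ℝ → H)
    (hu₁ : ∀ l ∈ Set.Ici (0:ℝ), HasDerivWithinAt u₁ (-gradF (u₁ l)) (Set.Ici 0) l)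
    (hu₂ : ∀ l ∈ Set.Ici (0:ℝ), HasDerivWithinAt u₂ (-gradF (u₂ l)) (Set.Ici 0) l) :
    (∀ l ∈ Set.Ici (0:ℝ),
        ‖u₁ l - u₂ l‖ ≤ Real.exp (-(c * l)) * ‖u₁ 0 - u₂ 0‖) ∧
      (u₁ 0 = u₂ 0 → Set.EqOn u₁ u₂ (Set.Ici 0)) := by
  have hdiff : ∀ l ∈ Ici (0:ℝ), HasDerivWithinAt (fun l => u₁ l - u₂ l)
      (-(gradF (u₁ l) - gradF (u₂ l))) (Ici 0) l := fun l hl => by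
    simpa only [neg_sub_neg, neg_sub] using (hu₁ l hl).fun_sub (hu₂ l hl)
  have hdiss : ∀ l ∈ Ici (0:ℝ), inner ℝ (u₁ l - u₂ l) (-(gradF (u₁ l) - gradF (u₂ l))) ≤
      -c * ‖u₁ l - u₂ l‖ ^ 2 := fun l _ => by
    rw [inner_neg_right, real_inner_comm]
    linarith [hmono (u₁ l) (u₂ l)]
  have hcontr : ∀ l ∈ Ici (0:ℝ), ‖u₁ l - u₂ l‖ ≤ exp (-(c * l)) * ‖u₁ 0 - u₂ 0‖ := fun l hl => by
    simpa using norm_le_exp_neg_mul_norm_of_inner_deriv_le (convex_Ici 0) hdiff hdiss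
      self_mem_Ici hl hl
  refine ⟨hcontr, fun h0 l hl => ?_⟩
  have := hcontr l hl
  rw [h0, sub_self, norm_zero, mul_zero] at this
  exact sub_eq_zero.mp (norm_le_zero_iff.mp this)

/-- Contraction estimate for gradient flows and uniqueness (from the proof of
Theorem 4.1): if `∇F` is monotone with constant `c ≥ 0`, then two gradient-flow
solutions satisfy `‖u₁(l) − u₂(l)‖ ≤ e^{−cl}‖u₁(0) − u₂(0)‖`; in particular two
solutions with the same initial datum coincide. -/
theorem gradient_flow_contraction
    {H : Type*} [NormedAddCommGroup H] [InnerProductSpace ℝ H] [CompleteSpace H]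
    (F : H → ℝ) (gradF : H → H) (hF : ∀ u : H, HasGradientAt F (gradF u) u)
    (c : ℝ) (hc : 0 ≤ c)
    (hmono : ∀ x y : H, c * ‖x - y‖ ^ 2 ≤ (inner ℝ (gradF x - gradF y) (x - y) : ℝ))
    (u₁ u₂ : ℝ → H)
    (hu₁ : ∀ l ∈ Set.Ici (0:ℝ), HasDerivWithinAt u₁ (-gradF (u₁ l)) (Set.Ici 0) l)
    (hu₂ : ∀ l ∈ Set.Ici (0:ℝ), HasDerivWithinAt u₂ (-gradF (u₂ l)) (Set.Ici 0) l) :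
    (∀ l ∈ Set.Ici (0:ℝ),
        ‖u₁ l - u₂ l‖ ≤ Real.exp (-(c * l)) * ‖u₁ 0 - u₂ 0‖) ∧
      (u₁ 0 = u₂ 0 → Set.EqOn u₁ u₂ (Set.Ici 0)) :=
  gradient_flow_contraction_general gradF c hmono u₁ u₂ hu₁ hu₂
end

section
/- Let H be a real Hilbert space, F : H → ℝ Fréchet differentiable with gradient ∇F, and assume ∇F is strongly monotone with constant c > 0, i.e. ⟨∇F(x) − ∇F(y), x − y⟩ ≥ c‖x − y‖² for all x, y. Let ū ∈ H satisfy ∇F(ū) = 0. If u : [0,∞) → H is a gradient-flow solution, then ‖u(l) − ū‖ ≤ e^{−c l} ‖u(0) − ū‖ for every l ≥ 0; in particular u(l) → ū as l → ∞. (Exponential decay of the gradient flow, Theorem 4.1(d), equation (4.3).) -/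
/-!
Along the flow, `d/dl ‖u - ū‖² = -2 ⟪∇F(u) - ∇F(ū), u - ū⟫ ≤ -2c ‖u - ū‖²` by strong
monotonicity and `∇F(ū) = 0`, so Grönwall's inequality gives `‖u l - ū‖² ≤ e^{-2cl} ‖u 0 - ū‖²`.
-/

open Set Filter Topology Real

theorem norm_le_exp_mul_norm_of_inner_deriv_le {E : Type*} [NormedAddCommGroup E]
    [InnerProductSpace ℝ E] {v v' : ℝ → E} {K a b : ℝ} (hab : a ≤ b)
    (hv : ContinuousOn v (Icc a b))
    (hv' : ∀ t ∈ Ico a b, HasDerivWithinAt v (v' t) (Ici t) t)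
    (bound : ∀ t ∈ Ico a b, inner ℝ (v t) (v' t) ≤ K * ‖v t‖ ^ 2) :
    ‖v b‖ ≤ exp (K * (b - a)) * ‖v a‖ := by
  have hsq : ‖v b‖ ^ 2 ≤ ‖v a‖ ^ 2 * exp (2 * K * (b - a)) := by
    have := le_gronwallBound_of_liminf_deriv_right_le (f := fun t => ‖v t‖ ^ 2)
      (f' := fun t => 2 * inner ℝ (v t) (v' t))
      (δ := ‖v a‖ ^ 2) (K := 2 * K) (ε := 0)
      (hv.norm.pow 2) (fun t ht _ hr => (hv' t ht).norm_sq.liminf_right_slope_le hr) le_rfl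
      (fun t ht => by linarith [bound t ht]) b ⟨hab, le_rfl⟩
    rwa [gronwallBound_ε0] at this
  have hexp : exp (2 * K * (b - a)) = exp (K * (b - a)) ^ 2 := by
    rw [← exp_nat_mul]; ring_nf
  rw [hexp, ← mul_pow, mul_comm] at hsq
  exact (pow_le_pow_iff_left₀ (norm_nonneg _) (by positivity) two_ne_zero).mp hsq

theorem tendsto_of_norm_sub_le_exp_mul {E : Type*} [NormedAddCommGroup E] {u : ℝ → E} {x : E}
    {c C : ℝ} (hc : 0 < c) (h : ∀ l ∈ Ici (0 : ℝ), ‖u l - x‖ ≤ exp (-(c * l)) * C) :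
    Tendsto u atTop (𝓝 x) := by
  rw [tendsto_iff_norm_sub_tendsto_zero]
  have hexp : Tendsto (fun l : ℝ => exp (-(c * l))) atTop (𝓝 0) :=
    tendsto_exp_atBot.comp (tendsto_neg_atBot_iff.2 (tendsto_id.const_mul_atTop hc))
  refine squeeze_zero' (Eventually.of_forall fun _ => norm_nonneg _)
    ((eventually_ge_atTop 0).mono h) ?_
  simpa using hexp.mul_const C

theorem gradient_flow_exponential_decay_general
    {H : Type*} [NormedAddCommGroup H] [InnerProductSpace ℝ H]
    (gradF : H → H)
    (c : ℝ) (hc : 0 < c)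
    (hmono : ∀ x y : H, c * ‖x - y‖ ^ 2 ≤ (inner ℝ (gradF x - gradF y) (x - y) : ℝ))
    (ubar : H) (hcrit : gradF ubar = 0)
    (u : ℝ → H)
    (hu : ∀ l ∈ Set.Ici (0:ℝ), HasDerivWithinAt u (-gradF (u l)) (Set.Ici 0) l) :
    (∀ l ∈ Set.Ici (0:ℝ),
        ‖u l - ubar‖ ≤ Real.exp (-(c * l)) * ‖u 0 - ubar‖) ∧
      Filter.Tendsto u Filter.atTop (nhds ubar) := by
  have hdissip : ∀ x : H, inner ℝ (x - ubar) (-gradF x) ≤ -c * ‖x - ubar‖ ^ 2 := fun x => by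
    have := hmono x ubar
    rw [hcrit, sub_zero, real_inner_comm] at this
    rw [inner_neg_right]
    linarith
  have hdecay : ∀ l ∈ Ici (0 : ℝ), ‖u l - ubar‖ ≤ exp (-(c * l)) * ‖u 0 - ubar‖ := by
    intro l hl
    have hcont : ContinuousOn u (Icc 0 l) := fun t ht =>
      (hu t ht.1).continuousWithinAt.mono Icc_subset_Ici_self
    simpa [neg_mul] using norm_le_exp_mul_norm_of_inner_deriv_le (v := fun t => u t - ubar)
      (K := -c) hl (hcont.sub continuousOn_const)
      (fun t ht => ((hu t ht.1).mono (Ici_subset_Ici.2 ht.1)).sub_const ubar)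
      (fun t _ => hdissip (u t))
  exact ⟨hdecay, tendsto_of_norm_sub_le_exp_mul hc hdecay⟩

/-- Exponential decay of the gradient flow towards a critical point
(Theorem 4.1(d), equation (4.3)): if `∇F` is strongly monotone with constant
`c > 0` and `∇F(ū) = 0`, then `‖u(l) − ū‖ ≤ e^{−cl}‖u(0) − ū‖` and
`u(l) → ū` as `l → ∞`. -/
theorem gradient_flow_exponential_decay
    {H : Type*} [NormedAddCommGroup H] [InnerProductSpace ℝ H] [CompleteSpace H]
    (F : H → ℝ) (gradF : H → H) (hF : ∀ u : H, HasGradientAt F (gradF u) u)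
    (c : ℝ) (hc : 0 < c)
    (hmono : ∀ x y : H, c * ‖x - y‖ ^ 2 ≤ (inner ℝ (gradF x - gradF y) (x - y) : ℝ))
    (ubar : H) (hcrit : gradF ubar = 0)
    (u : ℝ → H)
    (hu : ∀ l ∈ Set.Ici (0:ℝ), HasDerivWithinAt u (-gradF (u l)) (Set.Ici 0) l) :
    (∀ l ∈ Set.Ici (0:ℝ),
        ‖u l - ubar‖ ≤ Real.exp (-(c * l)) * ‖u 0 - ubar‖) ∧
      Filter.Tendsto u Filter.atTop (nhds ubar) :=
  gradient_flow_exponential_decay_general gradF c hc hmono ubar hcrit u hu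
end

section
/- Let H be a real Hilbert space, let F : H → ℝ be convex and Fréchet differentiable with gradient ∇F, assume ∇F is strongly monotone with constant c > 0 and Lipschitz continuous with constant C > 0, and let ū ∈ H satisfy ∇F(ū) = 0. If u : [0,∞) → H is a gradient-flow solution with u(0) = u⁰, then for every ℓ ≥ 0 one has ∫₀^ℓ ‖u'(l)‖ dl ≤ (2/√c)·(F(u⁰) − F(ū))^{1/2} ≤ 2·(C/c)^{1/2}·‖u⁰ − ū‖; in particular the gradient flow has finite length bounded by a constant (depending only on c and C) times ‖u⁰ − ū‖. (Length bound for the gradient flow, Theorem 4.2, equation (4.4).) -/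
/-!
Strong monotonicity of `∇F` makes `F` strongly convex, which gives quadratic growth
`c/2 ‖x - ū‖² ≤ F x - F ū` and the Polyak–Łojasiewicz inequality `2c (F x - F ū) ≤ ‖∇F x‖²`.
Along the flow the energy `E = F ∘ u - F ū` satisfies `E' = -‖∇F u‖²`, hence
`(√E)' = -‖∇F u‖² / (2√E) ≤ -(√c / 2) ‖∇F u‖`, and integrating bounds the length by `(2/√c) √E(0)`.
This needs `E > 0`; if instead `u` reaches `ū` at time `ℓ`, backward uniqueness for the Lipschitz
field `-∇F` makes `u` constant on `[0, ℓ]`. The second inequality is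
`F u⁰ - F ū ≤ ⟪∇F u⁰, u⁰ - ū⟫ ≤ C ‖u⁰ - ū‖²`.
-/

open Set Real

theorem integral_le_of_hasDerivAt_eq_neg_sq {E g : ℝ → ℝ} {a b κ : ℝ} (hab : a ≤ b) (hκ : 0 < κ)
    (hEcont : ContinuousOn E (Icc a b)) (hgcont : ContinuousOn g (Icc a b))
    (hE : ∀ x ∈ Ioo a b, HasDerivAt E (-g x ^ 2) x) (hEpos : ∀ x ∈ Ioo a b, 0 < E x)
    (hg : ∀ x ∈ Ioo a b, κ * √(E x) ≤ g x) :
    ∫ x in a..b, g x ≤ 2 / κ * (√(E a) - √(E b)) := by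
  have h := intervalIntegral.integral_le_sub_of_hasDeriv_right_of_le
    (g := fun x => -(2 / κ) * √(E x)) (g' := fun x => g x ^ 2 / (κ * √(E x))) hab ?_ ?_
    hgcont.integrableOn_Icc ?_
  · linarith
  · exact continuousOn_const.mul hEcont.sqrt
  · intro x hx
    have hsqrt := ((hE x hx).sqrt (hEpos x hx).ne').const_mul (-(2 / κ))
    refine hsqrt.hasDerivWithinAt.congr_deriv ?_
    field_simp
  · intro x hx
    have hs : 0 < κ * √(E x) := mul_pos hκ (sqrt_pos.mpr (hEpos x hx))
    rw [le_div_iff₀ hs]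
    nlinarith [hg x hx]

theorem eqOn_const_of_apply_eq_equilibrium {V : Type*} [NormedAddCommGroup V] [NormedSpace ℝ V]
    {v : V → V} {K : NNReal} (hv : LipschitzWith K v) {p : V} (hp : v p = 0) {u : ℝ → V}
    (hu : ∀ l ∈ Ici (0 : ℝ), HasDerivWithinAt u (v (u l)) (Ici 0) l) {T : ℝ} (huT : u T = p) :
    EqOn u (fun _ => p) (Icc 0 T) := by
  refine ODE_solution_unique_of_mem_Icc_left (v := fun _ => v) (s := fun _ => univ)
    (fun _ _ => hv.lipschitzOnWith)
    (fun t ht => (hu t ht.1).continuousWithinAt.mono Icc_subset_Ici_self)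
    (fun t ht => ?_) (fun _ _ => mem_univ _) continuousOn_const (fun t _ => ?_)
    (fun _ _ => mem_univ _) huT
  · exact ((hu t ht.1.le).hasDerivAt (Ici_mem_nhds ht.1)).hasDerivWithinAt
  · simpa [hp] using hasDerivWithinAt_const t (Iic t) p

section

variable {H : Type*} [NormedAddCommGroup H] [InnerProductSpace ℝ H] [CompleteSpace H]
  {F : H → ℝ} {gradF : H → H}

theorem HasGradientAt.comp_hasDerivWithinAt {γ : ℝ → H} {g γ' : H} {s : Set ℝ} {t : ℝ}
    (hF : HasGradientAt F g (γ t)) (hγ : HasDerivWithinAt γ γ' s t) :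
    HasDerivWithinAt (fun t => F (γ t)) (inner ℝ g γ') s t := by
  simpa [Function.comp_def, InnerProductSpace.toDual_apply_apply] using
    hF.hasFDerivAt.comp_hasDerivWithinAt t hγ

theorem add_inner_add_le_of_strongMonotone_gradient (hF : ∀ x, HasGradientAt F (gradF x) x)
    {c : ℝ} (hmono : ∀ x y : H, c * ‖x - y‖ ^ 2 ≤ inner ℝ (gradF x - gradF y) (x - y))
    (x y : H) : F x + inner ℝ (gradF x) (y - x) + c / 2 * ‖y - x‖ ^ 2 ≤ F y := by
  set v := y - x
  let φ : ℝ → ℝ := fun t => F (x + t • v) - t * inner ℝ (gradF x) v - c / 2 * t ^ 2 * ‖v‖ ^ 2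
  have hφ' (t : ℝ) : HasDerivAt φ
      (inner ℝ (gradF (x + t • v)) v - inner ℝ (gradF x) v - c * t * ‖v‖ ^ 2) t := by
    have hline : HasDerivAt (fun t : ℝ => x + t • v) v t := by
      simpa using ((hasDerivAt_id t).smul_const v).const_add x
    have hFline := hasDerivWithinAt_univ.mp
      ((hF _).comp_hasDerivWithinAt (hasDerivWithinAt_univ.mpr hline))
    refine ((hFline.fun_sub ((hasDerivAt_id t).mul_const (inner ℝ (gradF x) v))).fun_sub
      (((hasDerivAt_pow 2 t).const_mul (c / 2)).mul_const (‖v‖ ^ 2))).congr_deriv ?_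
    ring
  have hφ'_nonneg (t : ℝ) (ht : 0 < t) :
      0 ≤ inner ℝ (gradF (x + t • v)) v - inner ℝ (gradF x) v - c * t * ‖v‖ ^ 2 := by
    have h := hmono (x + t • v) x
    rw [add_sub_cancel_left, inner_smul_right, inner_sub_left, norm_smul, mul_pow,
      Real.norm_eq_abs, sq_abs] at h
    nlinarith
  have hmon : MonotoneOn φ (Ici 0) :=
    monotoneOn_of_hasDerivWithinAt_nonneg (convex_Ici 0)
      (fun t _ => (hφ' t).continuousAt.continuousWithinAt)
      (fun t _ => (hφ' t).hasDerivWithinAt)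
      (fun t ht => hφ'_nonneg t (by simpa using ht))
  have h01 := hmon self_mem_Ici (show (1 : ℝ) ∈ Ici 0 by norm_num) zero_le_one
  simp only [φ, zero_smul, add_zero, one_smul, add_sub_cancel, v] at h01
  linarith

theorem polyak_lojasiewicz_of_strongMonotone_gradient (hF : ∀ x, HasGradientAt F (gradF x) x)
    {c : ℝ} (hc : 0 < c)
    (hmono : ∀ x y : H, c * ‖x - y‖ ^ 2 ≤ inner ℝ (gradF x - gradF y) (x - y)) (x y : H) :
    2 * c * (F x - F y) ≤ ‖gradF x‖ ^ 2 := by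
  have h := add_inner_add_le_of_strongMonotone_gradient hF hmono x y
  have hcs : inner ℝ (gradF x) (x - y) ≤ ‖gradF x‖ * ‖x - y‖ := real_inner_le_norm _ _
  rw [← neg_sub x y, inner_neg_right, norm_neg] at h
  nlinarith [sq_nonneg (‖gradF x‖ - c * ‖x - y‖)]

theorem quadratic_growth_of_strongMonotone_gradient (hF : ∀ x, HasGradientAt F (gradF x) x)
    {c : ℝ} (hmono : ∀ x y : H, c * ‖x - y‖ ^ 2 ≤ inner ℝ (gradF x - gradF y) (x - y))
    {ubar : H} (hcrit : gradF ubar = 0) (x : H) :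
    c / 2 * ‖x - ubar‖ ^ 2 ≤ F x - F ubar := by
  have h := add_inner_add_le_of_strongMonotone_gradient hF hmono ubar x
  rw [hcrit, inner_zero_left] at h
  linarith

theorem sub_le_mul_sq_of_lipschitz_gradient (hF : ∀ x, HasGradientAt F (gradF x) x)
    {c : ℝ} (hc : 0 ≤ c)
    (hmono : ∀ x y : H, c * ‖x - y‖ ^ 2 ≤ inner ℝ (gradF x - gradF y) (x - y))
    {K : NNReal} (hlip : LipschitzWith K gradF) {ubar : H} (hcrit : gradF ubar = 0) (x : H) :
    F x - F ubar ≤ K * ‖x - ubar‖ ^ 2 := by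
  have h := add_inner_add_le_of_strongMonotone_gradient hF hmono x ubar
  have hgrad : ‖gradF x‖ ≤ K * ‖x - ubar‖ := by
    simpa [hcrit, dist_eq_norm] using hlip.dist_le_mul x ubar
  have hcs : inner ℝ (gradF x) (x - ubar) ≤ ‖gradF x‖ * ‖x - ubar‖ := real_inner_le_norm _ _
  rw [← neg_sub x ubar, inner_neg_right, norm_neg] at h
  nlinarith [mul_le_mul_of_nonneg_right hgrad (norm_nonneg (x - ubar)), sq_nonneg ‖x - ubar‖]

theorem hasDerivWithinAt_energy_of_gradientFlow (hF : ∀ x, HasGradientAt F (gradF x) x)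
    {u : ℝ → H} {s : Set ℝ} {l : ℝ}
    (hu : HasDerivWithinAt u (-gradF (u l)) s l) :
    HasDerivWithinAt (fun t => F (u t)) (-‖gradF (u l)‖ ^ 2) s l := by
  simpa [inner_neg_right, real_inner_self_eq_norm_sq] using (hF (u l)).comp_hasDerivWithinAt hu

theorem antitoneOn_energy_of_gradientFlow (hF : ∀ x, HasGradientAt F (gradF x) x) {u : ℝ → H}
    (hu : ∀ l ∈ Ici (0 : ℝ), HasDerivWithinAt u (-gradF (u l)) (Ici 0) l) :
    AntitoneOn (fun t => F (u t)) (Ici 0) := by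
  have hE l (hl : l ∈ Ici (0 : ℝ)) := hasDerivWithinAt_energy_of_gradientFlow hF (hu l hl)
  refine antitoneOn_of_hasDerivWithinAt_nonpos (f' := fun l => -‖gradF (u l)‖ ^ 2) (convex_Ici 0)
    (fun l hl => (hE l hl).continuousWithinAt) (fun l hl => ?_) (fun l _ => ?_)
  · rw [interior_Ici] at hl ⊢
    exact (hE l (mem_Ici_of_Ioi hl)).mono Ioi_subset_Ici_self
  · simp only [neg_nonpos]
    positivity

theorem integral_norm_gradient_le_of_gradientFlow (hF : ∀ x, HasGradientAt F (gradF x) x)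
    {c : ℝ} (hc : 0 < c)
    (hmono : ∀ x y : H, c * ‖x - y‖ ^ 2 ≤ inner ℝ (gradF x - gradF y) (x - y))
    {K : NNReal} (hlip : LipschitzWith K gradF) {ubar : H} (hcrit : gradF ubar = 0) {u : ℝ → H}
    (hu : ∀ l ∈ Ici (0 : ℝ), HasDerivWithinAt u (-gradF (u l)) (Ici 0) l) {T : ℝ} (hT : 0 ≤ T) :
    ∫ l in (0 : ℝ)..T, ‖gradF (u l)‖ ≤ 2 / √c * √(F (u 0) - F ubar) := by
  by_cases huT : u T = ubar
  · have hrest : EqOn u (fun _ => ubar) (Icc 0 T) :=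
      eqOn_const_of_apply_eq_equilibrium (v := fun x => -gradF x) hlip.neg (by simp [hcrit]) hu huT
    rw [intervalIntegral.integral_congr (g := fun _ => 0) fun l hl => by
      rw [hrest (uIcc_of_le hT ▸ hl), hcrit, norm_zero], intervalIntegral.integral_zero]
    positivity
  have hdist : 0 < ‖u T - ubar‖ := norm_pos_iff.mpr (sub_ne_zero.mpr huT)
  have hET : 0 < F (u T) - F ubar :=
    (by positivity : 0 < c / 2 * ‖u T - ubar‖ ^ 2).trans_le
      (quadratic_growth_of_strongMonotone_gradient hF hmono hcrit (u T))
  have hE l (hl : l ∈ Ici (0 : ℝ)) := hasDerivWithinAt_energy_of_gradientFlow hF (hu l hl)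
  have hEpos : ∀ l ∈ Ioo 0 T, 0 < F (u l) - F ubar := fun l hl =>
    hET.trans_le (by linarith [antitoneOn_energy_of_gradientFlow hF hu hl.1.le hT hl.2.le])
  have hlength := integral_le_of_hasDerivAt_eq_neg_sq (E := fun l => F (u l) - F ubar)
    (g := fun l => ‖gradF (u l)‖) hT (sqrt_pos.mpr hc)
    (fun l hl => ((hE l hl.1).continuousWithinAt.mono Icc_subset_Ici_self).sub
      continuousWithinAt_const)
    (hlip.continuous.comp_continuousOn fun l hl =>
      (hu l hl.1).continuousWithinAt.mono Icc_subset_Ici_self).norm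
    (fun l hl => ((hE l hl.1.le).hasDerivAt (Ici_mem_nhds hl.1)).sub_const _) hEpos
    (fun l hl => by
      rw [← sqrt_mul hc.le, ← sqrt_sq (norm_nonneg (gradF (u l)))]
      refine sqrt_le_sqrt ?_
      nlinarith [polyak_lojasiewicz_of_strongMonotone_gradient hF hc hmono (u l) ubar, hEpos l hl])
  refine hlength.trans (mul_le_mul_of_nonneg_left (sub_le_self _ (sqrt_nonneg _)) ?_)
  positivity

end

theorem gradient_flow_length_bound_general
    {H : Type*} [NormedAddCommGroup H] [InnerProductSpace ℝ H] [CompleteSpace H]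
    (F : H → ℝ)
    (gradF : H → H) (hF : ∀ u : H, HasGradientAt F (gradF u) u)
    (c : ℝ) (hc : 0 < c)
    (hmono : ∀ x y : H, c * ‖x - y‖ ^ 2 ≤ (inner ℝ (gradF x - gradF y) (x - y) : ℝ))
    (C : ℝ) (hC : 0 < C) (hlip : LipschitzWith C.toNNReal gradF)
    (ubar : H) (hcrit : gradF ubar = 0)
    (u0 : H) (u : ℝ → H) (hu0 : u 0 = u0)
    (hu : ∀ l ∈ Set.Ici (0:ℝ), HasDerivWithinAt u (-gradF (u l)) (Set.Ici 0) l) :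
    ∀ ℓ ∈ Set.Ici (0:ℝ),
      (∫ l in (0:ℝ)..ℓ, ‖derivWithin u (Set.Ici 0) l‖) ≤
          2 / Real.sqrt c * Real.sqrt (F u0 - F ubar) ∧
        2 / Real.sqrt c * Real.sqrt (F u0 - F ubar) ≤
          2 * Real.sqrt (C / c) * ‖u0 - ubar‖ := by
  intro ℓ (hℓ : 0 ≤ ℓ)
  have hspeed : EqOn (fun l => ‖derivWithin u (Ici 0) l‖) (fun l => ‖gradF (u l)‖) (uIcc 0 ℓ) :=
    fun l hl => by
      have hl₀ : l ∈ Ici (0 : ℝ) := (uIcc_of_le hℓ ▸ hl).1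
      simp only [(hu l hl₀).derivWithin (uniqueDiffOn_Ici 0 l hl₀), norm_neg]
  have hgap : F u0 - F ubar ≤ C * ‖u0 - ubar‖ ^ 2 := by
    simpa [hC.le] using sub_le_mul_sq_of_lipschitz_gradient hF hc.le hmono hlip hcrit u0
  constructor
  · rw [intervalIntegral.integral_congr hspeed, ← hu0]
    exact integral_norm_gradient_le_of_gradientFlow hF hc hmono hlip hcrit hu hℓ
  · calc 2 / √c * √(F u0 - F ubar) ≤ 2 / √c * √(C * ‖u0 - ubar‖ ^ 2) := by gcongr
      _ = 2 * √(C / c) * ‖u0 - ubar‖ := by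
        rw [sqrt_mul hC.le, sqrt_sq (norm_nonneg _), sqrt_div hC.le]
        ring

/-- Length bound for the gradient flow (Theorem 4.2, equation (4.4)): for
convex `F` with `c`-strongly monotone and `C`-Lipschitz gradient, a gradient
flow `u` starting at `u⁰` satisfies, for every `ℓ ≥ 0`,
`∫₀^ℓ ‖u'(l)‖ dl ≤ (2/√c)(F(u⁰) − F(ū))^{1/2} ≤ 2(C/c)^{1/2}‖u⁰ − ū‖`. -/
theorem gradient_flow_length_bound
    {H : Type*} [NormedAddCommGroup H] [InnerProductSpace ℝ H] [CompleteSpace H]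
    (F : H → ℝ) (hconv : ConvexOn ℝ Set.univ F)
    (gradF : H → H) (hF : ∀ u : H, HasGradientAt F (gradF u) u)
    (c : ℝ) (hc : 0 < c)
    (hmono : ∀ x y : H, c * ‖x - y‖ ^ 2 ≤ (inner ℝ (gradF x - gradF y) (x - y) : ℝ))
    (C : ℝ) (hC : 0 < C) (hlip : LipschitzWith C.toNNReal gradF)
    (ubar : H) (hcrit : gradF ubar = 0)
    (u0 : H) (u : ℝ → H) (hu0 : u 0 = u0)
    (hu : ∀ l ∈ Set.Ici (0:ℝ), HasDerivWithinAt u (-gradF (u l)) (Set.Ici 0) l) :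
    ∀ ℓ ∈ Set.Ici (0:ℝ),
      (∫ l in (0:ℝ)..ℓ, ‖derivWithin u (Set.Ici 0) l‖) ≤
          2 / Real.sqrt c * Real.sqrt (F u0 - F ubar) ∧
        2 / Real.sqrt c * Real.sqrt (F u0 - F ubar) ≤
          2 * Real.sqrt (C / c) * ‖u0 - ubar‖ :=
  gradient_flow_length_bound_general F gradF hF c hc hmono C hC hlip ubar hcrit u0 u hu0 hu
end

section
/- Let E be a real normed space, S > 0, and let z : [0,S] → E be continuous. Define V := {σ ∈ (0,S] : there exists δ > 0 such that z is constant on [σ−δ, σ] ∩ [0,S]} (the set of points at which z is constant on a left neighborhood). Then there exists a countable family of pairwise disjoint half-open intervals (sᵢ⁻, sᵢ⁺] with sᵢ⁻ < sᵢ⁺ in [0,S] such that V = ⋃ᵢ (sᵢ⁻, sᵢ⁺]. (Structure of the set of left-constancy points, Lemma 5.5.) -/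
lemma left_const_aux {E : Type*} [NormedAddCommGroup E] (S : ℝ) (z : ℝ → E)
    (hz : ContinuousOn z (Set.Icc 0 S)) (V : Set ℝ)
    (hVsub : V ⊆ Set.Ioc 0 S)
    (hVc : ∀ σ ∈ V, ∃ δ > 0, ∀ s ∈ Set.Icc (σ - δ) σ ∩ Set.Icc (0:ℝ) S, z s = z σ)
    {t u : ℝ} (htu : t ≤ u) (hsub : Set.Icc t u ⊆ V) :
    ∀ s ∈ Set.Icc t u, z s = z u := by
  set A := {s ∈ Set.Icc t u | ∀ r ∈ Set.Icc s u, z r = z u} with hA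
  have huA : u ∈ A := ⟨⟨htu, le_rfl⟩, fun r hr => by rw [le_antisymm hr.2 hr.1]⟩
  have hAne : A.Nonempty := ⟨u, huA⟩
  have hAbdd : BddBelow A := ⟨t, fun s hs => hs.1.1⟩
  set m := sInf A with hm
  have hmt : t ≤ m := le_csInf hAne fun s hs => hs.1.1
  have hmu : m ≤ u := csInf_le hAbdd huA
  have hstep1 : ∀ r ∈ Set.Ioc m u, z r = z u := by
    intro r hr
    obtain ⟨s, hsA, hsr⟩ := (csInf_lt_iff hAbdd hAne).mp hr.1
    exact hsA.2 r ⟨hsr.le, hr.2⟩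
  have hmem : m ∈ Set.Icc (0:ℝ) S := by
    have h := hVsub (hsub ⟨hmt, hmu⟩); exact ⟨h.1.le, h.2⟩
  have hzm : z m = z u := by
    rcases eq_or_lt_of_le hmu with h | h
    · rw [h]
    · have hsubset : Set.Ioc m u ⊆ Set.Icc 0 S := fun r hr => by
        have h2 := hVsub (hsub ⟨hmt.trans hr.1.le, hr.2⟩); exact ⟨h2.1.le, h2.2⟩
      have hten : Filter.Tendsto z (nhdsWithin m (Set.Ioc m u)) (nhds (z m)) :=
        (hz m hmem).mono hsubset
      have hneBot : (nhdsWithin m (Set.Ioc m u)).NeBot := by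
        rw [← mem_closure_iff_nhdsWithin_neBot, closure_Ioc h.ne]
        exact ⟨le_rfl, hmu⟩
      exact tendsto_nhds_unique hten
        (Filter.Tendsto.congr'
          (Filter.eventuallyEq_of_mem self_mem_nhdsWithin fun r hr => (hstep1 r hr).symm)
          tendsto_const_nhds)
  have hmA : m ∈ A := by
    refine ⟨⟨hmt, hmu⟩, fun r hr => ?_⟩
    rcases eq_or_lt_of_le hr.1 with h | h
    · rw [← h]; exact hzm
    · exact hstep1 r ⟨h, hr.2⟩
  have hmeqt : m = t := by
    by_contra hne
    have htm : t < m := lt_of_le_of_ne hmt (Ne.symm hne)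
    have hmV : m ∈ V := hsub ⟨hmt, hmu⟩
    obtain ⟨δ, hδ, hc⟩ := hVc m hmV
    have ht0 : (0:ℝ) < t := (hVsub (hsub ⟨le_rfl, htu⟩)).1
    have hs0A : max t (m - δ) ∈ A := by
      refine ⟨⟨le_max_left _ _, max_le htu (by linarith)⟩, fun r hr => ?_⟩
      rcases le_or_gt m r with h | h
      · exact hmA.2 r ⟨h, hr.2⟩
      · have hr1 : m - δ ≤ r := le_trans (le_max_right _ _) hr.1
        have hrt : t ≤ r := le_trans (le_max_left _ _) hr.1
        have := hc r ⟨⟨hr1, h.le⟩, ⟨le_trans ht0.le hrt, le_trans h.le hmem.2⟩⟩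
        rw [this, hzm]
    have := csInf_le hAbdd hs0A
    have hlt : max t (m - δ) < m := max_lt htm (by linarith)
    rw [← hm] at this
    linarith
  intro s hs
  exact hmA.2 s ⟨hmeqt ▸ hs.1, hs.2⟩

/-- Structure of the set of left-constancy points (Lemma 5.5): if
`z : [0,S] → E` is continuous, the set `V` of points `σ ∈ (0,S]` at which `z`
is constant on a left neighborhood is a countable union of pairwise disjoint
half-open intervals `(sᵢ⁻, sᵢ⁺] ⊆ [0,S]`. -/
theorem left_constancy_set_structure
    {E : Type*} [NormedAddCommGroup E] [NormedSpace ℝ E]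
    (S : ℝ) (hS : 0 < S) (z : ℝ → E) (hz : ContinuousOn z (Set.Icc 0 S))
    (V : Set ℝ)
    (hV : V = {σ : ℝ | σ ∈ Set.Ioc (0:ℝ) S ∧
      ∃ δ > 0, ∀ s ∈ Set.Icc (σ - δ) σ ∩ Set.Icc (0:ℝ) S, z s = z σ}) :
    ∃ I : Set (ℝ × ℝ), I.Countable ∧
      (∀ p ∈ I, p.1 < p.2 ∧ 0 ≤ p.1 ∧ p.2 ≤ S) ∧
      (I.Pairwise fun p q => Disjoint (Set.Ioc p.1 p.2) (Set.Ioc q.1 q.2)) ∧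
      V = ⋃ p ∈ I, Set.Ioc p.1 p.2 := by
  classical
  have hVsub : V ⊆ Set.Ioc 0 S := by rw [hV]; exact fun σ h => h.1
  have hVc : ∀ σ ∈ V, ∃ δ > 0, ∀ s ∈ Set.Icc (σ - δ) σ ∩ Set.Icc (0:ℝ) S, z s = z σ := by
    rw [hV]; exact fun σ h => h.2
  -- every point of V has a left Ioc-neighborhood inside V
  have hA : ∀ σ ∈ V, ∃ δ > 0, Set.Ioc (σ - δ) σ ⊆ V := by
    intro σ hσ
    obtain ⟨δ, hδ, hc⟩ := hVc σ hσ
    obtain ⟨hσ0, hσS⟩ := hVsub hσ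
    refine ⟨min δ σ, lt_min hδ hσ0, fun t ht => ?_⟩
    have hmin : σ - min δ σ ≥ σ - δ := by
      have := min_le_left δ σ; linarith
    have hmin0 : (0:ℝ) ≤ σ - min δ σ := by
      have := min_le_right δ σ; linarith
    have ht0 : 0 < t := lt_of_le_of_lt hmin0 ht.1
    have htS : t ≤ S := le_trans ht.2 hσS
    have hztσ : z t = z σ := hc t ⟨⟨le_trans hmin ht.1.le, ht.2⟩, ⟨ht0.le, htS⟩⟩
    rw [hV]
    refine ⟨⟨ht0, htS⟩, t - (σ - min δ σ), by linarith [ht.1], ?_⟩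
    intro s hs
    have hs1 : σ - δ ≤ s := by have := hs.1.1; linarith [hmin]
    have hs2 : s ≤ σ := le_trans hs.1.2 ht.2
    rw [hc s ⟨⟨hs1, hs2⟩, hs.2⟩, hztσ]
  set C : ℝ → Set ℝ := fun σ => Set.ordConnectedComponent V σ with hC
  have hmaster : ∀ σ ∈ V, 0 ≤ sInf (C σ) ∧ sSup (C σ) ≤ S ∧
      sInf (C σ) < sSup (C σ) ∧ C σ = Set.Ioc (sInf (C σ)) (sSup (C σ)) := by
    intro σ hσ
    have hσC : σ ∈ C σ := Set.self_mem_ordConnectedComponent.mpr hσ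
    have hCsub : C σ ⊆ V := Set.ordConnectedComponent_subset
    have hCne : (C σ).Nonempty := ⟨σ, hσC⟩
    have hbddB : BddBelow (C σ) := ⟨0, fun x hx => (hVsub (hCsub hx)).1.le⟩
    have hbddA : BddAbove (C σ) := ⟨S, fun x hx => (hVsub (hCsub hx)).2⟩
    set a := sInf (C σ) with ha
    set b := sSup (C σ) with hb
    have h0a : 0 ≤ a := le_csInf hCne fun x hx => (hVsub (hCsub hx)).1.le
    have hbS : b ≤ S := csSup_le hCne fun x hx => (hVsub (hCsub hx)).2
    have haσ : a ≤ σ := csInf_le hbddB hσC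
    have hσb : σ ≤ b := le_csSup hbddA hσC
    have hIooV : Set.Ioo a b ⊆ V := by
      intro r hr
      obtain ⟨c, hcC, hcr⟩ := (csInf_lt_iff hbddB hCne).mp hr.1
      obtain ⟨d, hdC, hrd⟩ := (lt_csSup_iff hbddA hCne).mp hr.2
      rcases le_or_gt r σ with h | h
      · exact (Set.mem_ordConnectedComponent.mp hcC) (Set.mem_uIcc.mpr (Or.inr ⟨hcr.le, h⟩))
      · exact (Set.mem_ordConnectedComponent.mp hdC) (Set.mem_uIcc.mpr (Or.inl ⟨h.le, hrd.le⟩))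
    have hIooC : Set.Ioo a b ⊆ C σ := by
      intro x hx
      rw [hC]; rw [Set.mem_ordConnectedComponent]
      intro r hr
      rcases Set.mem_uIcc.mp hr with ⟨h1, h2⟩ | ⟨h1, h2⟩
      · rcases eq_or_lt_of_le h1 with h | h
        · exact h ▸ hσ
        · exact hIooV ⟨lt_of_le_of_lt haσ h, lt_of_le_of_lt h2 hx.2⟩
      · rcases eq_or_lt_of_le h2 with h | h
        · exact h ▸ hσ
        · exact hIooV ⟨lt_of_lt_of_le hx.1 h1, lt_of_lt_of_le h hσb⟩
    have hbC : b ∈ C σ := by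
      rcases eq_or_lt_of_le hσb with h | hσb'
      · exact h ▸ hσC
      · have hIcoV : Set.Ico σ b ⊆ V := by
          intro s hs
          rcases eq_or_lt_of_le hs.1 with h | h
          · exact h ▸ hσ
          · exact hIooV ⟨lt_of_le_of_lt haσ h, hs.2⟩
        have hconst' : ∀ s ∈ Set.Ico σ b, z s = z σ := by
          intro s hs
          exact (left_const_aux S z hz V hVsub hVc hs.1
            (fun r hr => hIcoV ⟨hr.1, lt_of_le_of_lt hr.2 hs.2⟩) σ ⟨le_rfl, hs.1⟩).symm
        have hσ0 : (0:ℝ) < σ := (hVsub hσ).1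
        have hb0S : b ∈ Set.Icc (0:ℝ) S := ⟨le_trans hσ0.le hσb, hbS⟩
        have hzb : z b = z σ := by
          have hsubset : Set.Ico σ b ⊆ Set.Icc 0 S :=
            fun r hr => ⟨le_trans hσ0.le hr.1, le_trans hr.2.le hbS⟩
          have hten : Filter.Tendsto z (nhdsWithin b (Set.Ico σ b)) (nhds (z b)) :=
            (hz b hb0S).mono hsubset
          have hneBot : (nhdsWithin b (Set.Ico σ b)).NeBot := by
            rw [← mem_closure_iff_nhdsWithin_neBot, closure_Ico hσb'.ne]
            exact ⟨hσb, le_rfl⟩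
          exact tendsto_nhds_unique hten
            (Filter.Tendsto.congr'
              (Filter.eventuallyEq_of_mem self_mem_nhdsWithin fun r hr => (hconst' r hr).symm)
              tendsto_const_nhds)
        have hbV : b ∈ V := by
          rw [hV]
          refine ⟨⟨lt_of_lt_of_le hσ0 hσb, hbS⟩, b - σ, by linarith, ?_⟩
          intro s hs
          have hs1 : σ ≤ s := by have := hs.1.1; linarith
          rcases eq_or_lt_of_le hs.1.2 with h | h
          · rw [h]
          · rw [hconst' s ⟨hs1, h⟩, hzb]
        rw [hC]; rw [Set.mem_ordConnectedComponent]
        intro r hr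
        rcases Set.mem_uIcc.mp hr with ⟨h1, h2⟩ | ⟨h1, h2⟩
        · rcases eq_or_lt_of_le h2 with h | h
          · exact h ▸ hbV
          · exact hIcoV ⟨h1, h⟩
        · exact absurd (le_trans h1 h2) (not_le.mpr hσb')
    have haV : a ∉ V := by
      intro haV
      obtain ⟨δ, hδ, hsubδ⟩ := hA a haV
      have htC : a - δ/2 ∈ C σ := by
        rw [hC]; rw [Set.mem_ordConnectedComponent]
        intro r hr
        rcases Set.mem_uIcc.mp hr with ⟨h1, h2⟩ | ⟨h1, h2⟩
        · exfalso; linarith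
        · rcases lt_or_ge r a with h | h
          · exact hsubδ ⟨by linarith, h.le⟩
          · rcases eq_or_lt_of_le h with h' | h'
            · exact h' ▸ haV
            · rcases eq_or_lt_of_le h2 with h'' | h''
              · exact h'' ▸ hσ
              · exact hIooV ⟨h', lt_of_lt_of_le h'' hσb⟩
      have := csInf_le hbddB htC
      rw [← ha] at this
      linarith
    have hCeq : C σ = Set.Ioc a b := by
      apply Set.Subset.antisymm
      · intro x hx
        refine ⟨lt_of_le_of_ne (csInf_le hbddB hx) ?_, le_csSup hbddA hx⟩
        intro h
        exact haV (h ▸ hCsub hx)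
      · intro x hx
        rcases eq_or_lt_of_le hx.2 with h | h
        · exact h ▸ hbC
        · exact hIooC ⟨hx.1, h⟩
    have hab : a < b := by
      obtain ⟨δ, hδ, hsubδ⟩ := hA σ hσ
      have htC : σ - δ/2 ∈ C σ := by
        rw [hC]; rw [Set.mem_ordConnectedComponent]
        intro r hr
        rcases Set.mem_uIcc.mp hr with ⟨h1, h2⟩ | ⟨h1, h2⟩
        · exfalso; linarith
        · exact hsubδ ⟨by linarith, h2⟩
      have h1 := csInf_le hbddB htC
      rw [← ha] at h1
      calc a ≤ σ - δ/2 := h1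
        _ < σ := by linarith
        _ ≤ b := hσb
    exact ⟨h0a, hbS, hab, hCeq⟩
  set I : Set (ℝ × ℝ) := (fun σ => (sInf (C σ), sSup (C σ))) '' V with hI
  have hIocEq : ∀ p ∈ I, ∃ σ ∈ V, p = (sInf (C σ), sSup (C σ)) ∧
      Set.Ioc p.1 p.2 = C σ := by
    rintro p ⟨σ, hσ, rfl⟩
    exact ⟨σ, hσ, rfl, ((hmaster σ hσ).2.2.2).symm⟩
  have hbounds : ∀ p ∈ I, p.1 < p.2 ∧ 0 ≤ p.1 ∧ p.2 ≤ S := by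
    rintro p ⟨σ, hσ, rfl⟩
    obtain ⟨h1, h2, h3, _⟩ := hmaster σ hσ
    exact ⟨h3, h1, h2⟩
  have hdisj : I.Pairwise fun p q => Disjoint (Set.Ioc p.1 p.2) (Set.Ioc q.1 q.2) := by
    intro p hp q hq hpq
    obtain ⟨σ, hσ, hpσ, hpC⟩ := hIocEq p hp
    obtain ⟨τ, hτ, hqτ, hqC⟩ := hIocEq q hq
    rw [Set.disjoint_left]
    intro x hxp hxq
    rw [hpC] at hxp
    rw [hqC] at hxq
    have e1 : Set.ordConnectedComponent V σ = Set.ordConnectedComponent V x :=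
      Set.ordConnectedComponent_eq (Set.mem_ordConnectedComponent.mp hxp)
    have e2 : Set.ordConnectedComponent V τ = Set.ordConnectedComponent V x :=
      Set.ordConnectedComponent_eq (Set.mem_ordConnectedComponent.mp hxq)
    have : C σ = C τ := by rw [hC]; simp only; rw [e1, e2]
    exact hpq (by rw [hpσ, hqτ, this])
  refine ⟨I, ?_, hbounds, hdisj, ?_⟩
  · -- countability
    set f : ℝ × ℝ → ℕ := fun p =>
      if h : ∃ q : ℚ, p.1 < (q:ℝ) ∧ (q:ℝ) < p.2 then Encodable.encode h.choose else 0
      with hf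
    rw [Set.countable_iff_exists_injOn]
    refine ⟨f, fun p hp q hq hfpq => ?_⟩
    by_contra hpq
    have hep : ∃ r : ℚ, p.1 < (r:ℝ) ∧ (r:ℝ) < p.2 := exists_rat_btwn (hbounds p hp).1
    have heq : ∃ r : ℚ, q.1 < (r:ℝ) ∧ (r:ℝ) < q.2 := exists_rat_btwn (hbounds q hq).1
    have hfp : f p = Encodable.encode hep.choose := by rw [hf]; simp [hep]
    have hfq : f q = Encodable.encode heq.choose := by rw [hf]; simp [heq]
    have hchoose : hep.choose = heq.choose := by
      apply Encodable.encode_injective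
      rw [← hfp, ← hfq, hfpq]
    have hmemp : (hep.choose : ℝ) ∈ Set.Ioc p.1 p.2 :=
      ⟨hep.choose_spec.1, hep.choose_spec.2.le⟩
    have hmemq : (hep.choose : ℝ) ∈ Set.Ioc q.1 q.2 := by
      rw [hchoose]
      exact ⟨heq.choose_spec.1, heq.choose_spec.2.le⟩
    exact Set.disjoint_left.mp (hdisj hp hq hpq) hmemp hmemq
  · -- union
    ext x
    simp only [Set.mem_iUnion, exists_prop]
    constructor
    · intro hx
      refine ⟨(sInf (C x), sSup (C x)), ⟨x, hx, rfl⟩, ?_⟩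
      rw [← (hmaster x hx).2.2.2]
      exact Set.self_mem_ordConnectedComponent.mpr hx
    · rintro ⟨p, hp, hxp⟩
      obtain ⟨σ, hσ, _, hpC⟩ := hIocEq p hp
      rw [hpC] at hxp
      exact Set.ordConnectedComponent_subset hxp
end

section
/- Let S > 0, let U ⊆ (0,S] be Lebesgue measurable, and define β : [0,S] → ℝ by β(s) := Leb(U ∩ [0,s]). Then the image β([0,S] \ U) of the complement of U under β has Lebesgue measure zero. (Part (b) of Lemma 5.6.) -/
open MeasureTheory

/-- The function `β(s) := Leb(U ∩ [0,s])`. -/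
noncomputable def betaFun (U : Set ℝ) (s : ℝ) : ℝ :=
  (volume (U ∩ Set.Icc 0 s)).toReal

/-!
`β` is the distribution function of Lebesgue measure restricted to `U ∩ [0, ∞)`, hence monotone
and `1`-Lipschitz, and by Lebesgue's differentiation theorem `β' = 1_{U ∩ [0, ∞)}` almost
everywhere. So `β' = 0` at almost every point outside `U`. The image of the points where `β' = 0`
is null by Sard's lemma, and the image of the remaining null set is null because `β` is Lipschitz.
-/

open Set

theorem LipschitzWith.volume_image_eq_zero_of_ae_hasDerivAt_zero {f : ℝ → ℝ} {K : NNReal}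
    (hf : LipschitzWith K f) {A : Set ℝ} (hA : ∀ᵐ x, x ∈ A → HasDerivAt f 0 x) :
    volume (f '' A) = 0 := by
  set D := {x | HasDerivAt f 0 x}
  have h_flat : volume (f '' (A ∩ D)) = 0 :=
    addHaar_image_eq_zero_of_det_fderivWithin_eq_zero volume (f' := fun _ => 0)
      (fun x hx => by simpa using hx.2.hasFDerivAt.hasFDerivWithinAt) (fun _ _ => by simp)
  have h_null : volume (f '' (A \ D)) = 0 := by
    have h_diff : volume (A \ D) = 0 := by
      refine measure_mono_null (fun x hx => ?_) (ae_iff.1 hA)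
      exact fun h => hx.2 (h hx.1)
    have h_image := hf.hausdorffMeasure_image_le zero_le_one (A \ D)
    rw [hausdorffMeasure_real, h_diff, mul_zero] at h_image
    exact nonpos_iff_eq_zero.1 h_image
  rw [← inter_union_sdiff A D, image_union]
  exact measure_union_null h_flat h_null

section betaFun

variable (U : Set ℝ)

lemma betaFun_eq_toReal_restrict_Iic (s : ℝ) :
    betaFun U s = (volume.restrict (U ∩ Ici 0) (Iic s)).toReal := by
  rw [betaFun, Measure.restrict_apply measurableSet_Iic, inter_comm (Iic s), inter_assoc,
    Ici_inter_Iic]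

lemma restrict_inter_Ici_zero_ne_top_of_subset_Iic {t : Set ℝ} {s : ℝ} (hts : t ⊆ Iic s) :
    volume.restrict (U ∩ Ici 0) t ≠ ⊤ := by
  refine ne_top_of_le_ne_top ?_ (measure_mono hts)
  rw [Measure.restrict_apply measurableSet_Iic]
  exact ne_top_of_le_ne_top (measure_Icc_lt_top (μ := volume) (a := 0) (b := s)).ne
    (measure_mono fun x hx => ⟨hx.2.2, hx.1⟩)

lemma betaFun_sub_betaFun {a b : ℝ} (hab : a ≤ b) :
    betaFun U b - betaFun U a = (volume.restrict (U ∩ Ici 0) (Ioc a b)).toReal := by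
  rw [betaFun_eq_toReal_restrict_Iic, betaFun_eq_toReal_restrict_Iic, ← Iic_union_Ioc_eq_Iic hab,
    measure_union (Iic_disjoint_Ioc le_rfl) measurableSet_Ioc,
    ENNReal.toReal_add (restrict_inter_Ici_zero_ne_top_of_subset_Iic U subset_rfl)
      (restrict_inter_Ici_zero_ne_top_of_subset_Iic U Ioc_subset_Iic_self),
    add_sub_cancel_left]

lemma betaFun_monotone : Monotone (betaFun U) := fun _ _ hab =>
  sub_nonneg.1 ((betaFun_sub_betaFun U hab).symm ▸ ENNReal.toReal_nonneg)

lemma betaFun_lipschitzWith_one : LipschitzWith 1 (betaFun U) := by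
  refine LipschitzWith.of_le_add_mul 1 fun x y => ?_
  rw [NNReal.coe_one, one_mul]
  rcases le_total x y with hxy | hyx
  · linarith [betaFun_monotone U hxy, dist_nonneg (x := x) (y := y)]
  have h_le : volume.restrict (U ∩ Ici 0) (Ioc y x) ≤ ENNReal.ofReal (dist x y) := by
    rw [Real.dist_eq, abs_of_nonneg (sub_nonneg.2 hyx), ← Real.volume_Ioc]
    exact Measure.restrict_le_self _
  calc betaFun U x = betaFun U y + (volume.restrict (U ∩ Ici 0) (Ioc y x)).toReal := by
        rw [← betaFun_sub_betaFun U hyx, add_sub_cancel]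
    _ ≤ betaFun U y + dist x y := by
        gcongr
        exact ENNReal.toReal_le_of_le_ofReal dist_nonneg h_le

lemma betaFun_stieltjesFunction_measure :
    (betaFun_monotone U).stieltjesFunction.measure = volume.restrict (U ∩ Ici 0) := by
  have h_eq x : (betaFun_monotone U).stieltjesFunction x = betaFun U x :=
    (betaFun_monotone U).continuousWithinAt_Ioi_iff_rightLim_eq.1
      (betaFun_lipschitzWith_one U).continuous.continuousWithinAt
  refine Measure.ext_of_Ioc _ _ fun a b hab => ?_
  rw [StieltjesFunction.measure_Ioc, h_eq, h_eq, betaFun_sub_betaFun U hab.le,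
    ENNReal.ofReal_toReal]
  exact restrict_inter_Ici_zero_ne_top_of_subset_Iic U Ioc_subset_Iic_self

lemma ae_hasDerivAt_betaFun_zero_of_notMem (hU : MeasurableSet U) :
    ∀ᵐ x, x ∉ U → HasDerivAt (betaFun U) 0 x := by
  filter_upwards [(betaFun_monotone U).ae_hasDerivAt,
    Measure.rnDeriv_restrict_self volume (hU.inter measurableSet_Ici)] with x h_deriv h_rn hxU
  rw [betaFun_stieltjesFunction_measure, h_rn, indicator_of_notMem fun h => hxU h.1] at h_deriv
  simpa using h_deriv

end betaFun

theorem beta_image_of_complement_null_general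
    (S : ℝ) (U : Set ℝ) (hU : MeasurableSet U) :
    volume (betaFun U '' (Set.Icc 0 S \ U)) = 0 :=
  (betaFun_lipschitzWith_one U).volume_image_eq_zero_of_ae_hasDerivAt_zero <|
    (ae_hasDerivAt_betaFun_zero_of_notMem U hU).mono fun _ h hx => h hx.2

/-- Part (b) of Lemma 5.6: the image under `β` of the complement of `U`
has Lebesgue measure zero. -/
theorem beta_image_of_complement_null
    (S : ℝ) (hS : 0 < S) (U : Set ℝ) (hU : MeasurableSet U)
    (hUsub : U ⊆ Set.Ioc 0 S) :
    volume (betaFun U '' (Set.Icc 0 S \ U)) = 0 :=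
  beta_image_of_complement_null_general S U hU
end

section
/- Let S > 0, let U ⊆ (0,S] be Lebesgue measurable, set β(s) := Leb(U ∩ [0,s]), R := β(S), and α(r) := min{s ∈ [0,S] : β(s) = r}. Let r̄ ∈ (0,R) and put s̄ := α(r̄). If {s ∈ [0,S] : β(s) = r̄} = {s̄} and β is differentiable at s̄ with β'(s̄) = 1, then α is differentiable at r̄ with α'(r̄) = 1. (Part (c) of Lemma 5.8.) -/
open MeasureTheory

/-- The "right inverse" `α(r) := min{s ∈ [0,S] : β(s) = r}`. -/
noncomputable def alphaFun (U : Set ℝ) (S : ℝ) (r : ℝ) : ℝ :=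
  sInf {s : ℝ | s ∈ Set.Icc 0 S ∧ betaFun U s = r}

lemma betaFun_fin (U : Set ℝ) (s : ℝ) : volume (U ∩ Set.Icc 0 s) ≠ ⊤ :=
  (lt_of_le_of_lt (measure_mono Set.inter_subset_right) measure_Icc_lt_top).ne

lemma betaFun_mono (U : Set ℝ) : Monotone (betaFun U) := by
  intro s t hst
  exact ENNReal.toReal_mono (betaFun_fin U t)
    (measure_mono (Set.inter_subset_inter_right _ (Set.Icc_subset_Icc_right hst)))

lemma betaFun_lip (U : Set ℝ) : LipschitzWith 1 (betaFun U) := by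
  apply LipschitzWith.of_dist_le_mul
  intro s t
  wlog h : t ≤ s generalizing s t
  · rw [dist_comm, dist_comm s t]; exact this t s (le_of_not_ge h)
  rw [NNReal.coe_one, one_mul, Real.dist_eq, Real.dist_eq,
      abs_of_nonneg (sub_nonneg.2 (betaFun_mono U h)),
      abs_of_nonneg (sub_nonneg.2 h)]
  have h1 : U ∩ Set.Icc 0 s ⊆ (U ∩ Set.Icc 0 t) ∪ Set.Ioc t s := by
    rintro x ⟨hxU, hx0, hxs⟩
    by_cases hxt : x ≤ t
    · exact Or.inl ⟨hxU, hx0, hxt⟩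
    · exact Or.inr ⟨lt_of_not_ge hxt, hxs⟩
  have h2 : volume (U ∩ Set.Icc 0 s) ≤ volume (U ∩ Set.Icc 0 t) + volume (Set.Ioc t s) :=
    le_trans (measure_mono h1) (measure_union_le _ _)
  have h3 := ENNReal.toReal_mono (by
      refine ENNReal.add_ne_top.2 ⟨betaFun_fin U t, ?_⟩
      simp [Real.volume_Ioc]) h2
  rw [ENNReal.toReal_add (betaFun_fin U t) (by simp [Real.volume_Ioc]),
      Real.volume_Ioc, ENNReal.toReal_ofReal (by linarith)] at h3
  unfold betaFun
  linarith

lemma betaFun_zero {U : Set ℝ} {S : ℝ} (hUsub : U ⊆ Set.Ioc 0 S) : betaFun U 0 = 0 := by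
  have : U ∩ Set.Icc 0 0 = ∅ := by
    ext x
    simp only [Set.Icc_self, Set.mem_inter_iff, Set.mem_singleton_iff, Set.mem_empty_iff_false,
      iff_false, not_and]
    rintro hx rfl
    exact absurd (hUsub hx).1 (lt_irrefl 0)
  unfold betaFun
  rw [this]
  simp

/-- Part (c) of Lemma 5.8: if `r̄ ∈ (0,R)`, the level set `{β = r̄}` in `[0,S]`
reduces to the single point `s̄ = α(r̄)`, and `β` is differentiable at `s̄` with
`β'(s̄) = 1`, then `α` is differentiable at `r̄` with `α'(r̄) = 1`. -/
theorem alpha_differentiable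
    (S : ℝ) (hS : 0 < S) (U : Set ℝ) (hU : MeasurableSet U)
    (hUsub : U ⊆ Set.Ioc 0 S)
    (rbar : ℝ) (hrbar : rbar ∈ Set.Ioo 0 (betaFun U S))
    (sbar : ℝ) (hsbar : sbar = alphaFun U S rbar)
    (huniq : {s : ℝ | s ∈ Set.Icc 0 S ∧ betaFun U s = rbar} = {sbar})
    (hderiv : HasDerivAt (betaFun U) 1 sbar) :
    HasDerivWithinAt (alphaFun U S) 1 (Set.Icc 0 (betaFun U S)) rbar := by
  have hmono := betaFun_mono U
  have hcont : Continuous (betaFun U) := (betaFun_lip U).continuous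
  have hβ0 : betaFun U 0 = 0 := betaFun_zero hUsub
  obtain ⟨hr0, hrR⟩ := hrbar
  have hsbar_mem : sbar ∈ {s : ℝ | s ∈ Set.Icc 0 S ∧ betaFun U s = rbar} := by
    rw [huniq]; rfl
  obtain ⟨⟨hs0, hsS⟩, hβs⟩ := hsbar_mem
  have hspos : 0 < sbar := by
    rcases lt_or_eq_of_le hs0 with h | h
    · exact h
    · exfalso; rw [← h, hβ0] at hβs; linarith
  have hsltS : sbar < S := by
    rcases lt_or_eq_of_le hsS with h | h
    · exact h
    · exfalso; rw [h] at hβs; linarith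
  -- strict crossing of the level rbar at sbar
  have hlt : ∀ s, 0 ≤ s → s < sbar → betaFun U s < rbar := by
    intro s h0 hslt
    have hle : betaFun U s ≤ rbar := hβs ▸ hmono hslt.le
    rcases lt_or_eq_of_le hle with h | h
    · exact h
    · exfalso
      have hmem : s ∈ {s : ℝ | s ∈ Set.Icc 0 S ∧ betaFun U s = rbar} :=
        ⟨⟨h0, hslt.le.trans hsS⟩, h⟩
      rw [huniq] at hmem
      exact hslt.ne hmem
  have hgt : ∀ s, sbar < s → s ≤ S → rbar < betaFun U s := by
    intro s hslt hsS'
    have hle : rbar ≤ betaFun U s := hβs ▸ hmono hslt.le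
    rcases lt_or_eq_of_le hle with h | h
    · exact h
    · exfalso
      have hmem : s ∈ {s : ℝ | s ∈ Set.Icc 0 S ∧ betaFun U s = rbar} :=
        ⟨⟨hspos.le.trans hslt.le, hsS'⟩, h.symm⟩
      rw [huniq] at hmem
      exact hslt.ne' hmem
  -- α is a genuine right inverse on (0, R)
  have hsol : ∀ y ∈ Set.Ioo (0:ℝ) (betaFun U S),
      alphaFun U S y ∈ {s : ℝ | s ∈ Set.Icc 0 S ∧ betaFun U s = y} := by
    intro y hy
    have hne : Set.Nonempty {s : ℝ | s ∈ Set.Icc 0 S ∧ betaFun U s = y} := by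
      obtain ⟨s, hs, hsy⟩ := intermediate_value_Icc hS.le hcont.continuousOn
        (Set.mem_Icc.2 ⟨by rw [hβ0]; exact hy.1.le, hy.2.le⟩)
      exact ⟨s, hs, hsy⟩
    have hcl : IsClosed {s : ℝ | s ∈ Set.Icc 0 S ∧ betaFun U s = y} := by
      have heq : {s : ℝ | s ∈ Set.Icc 0 S ∧ betaFun U s = y}
          = Set.Icc 0 S ∩ betaFun U ⁻¹' {y} := by
        ext x
        simp only [Set.mem_setOf_eq, Set.mem_inter_iff, Set.mem_preimage,
          Set.mem_singleton_iff]
      rw [heq]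
      exact isClosed_Icc.inter (isClosed_singleton.preimage hcont)
    exact hcl.csInf_mem hne ⟨0, fun x hx => hx.1.1⟩
  -- continuity of α at rbar
  have hacont : ContinuousAt (alphaFun U S) rbar := by
    rw [Metric.continuousAt_iff]
    intro ε hε
    set ε' := min (ε/2) (min (sbar/2) ((S - sbar)/2)) with hε'def
    have hε'pos : 0 < ε' :=
      lt_min (by linarith) (lt_min (by linarith) (by linarith))
    have hε'le1 : ε' ≤ sbar/2 := (min_le_right _ _).trans (min_le_left _ _)
    have hε'le2 : ε' ≤ (S - sbar)/2 := (min_le_right _ _).trans (min_le_right _ _)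
    have hε'leε : ε' ≤ ε/2 := min_le_left _ _
    have hβlt : betaFun U (sbar - ε') < rbar := hlt _ (by linarith) (by linarith)
    have hβgt : rbar < betaFun U (sbar + ε') := hgt _ (by linarith) (by linarith)
    refine ⟨min (rbar - betaFun U (sbar - ε')) (betaFun U (sbar + ε') - rbar),
      lt_min (by linarith) (by linarith), ?_⟩
    intro r hr
    rw [Real.dist_eq, lt_min_iff] at hr
    obtain ⟨ha, hb⟩ := hr
    obtain ⟨ha1, ha2⟩ := abs_lt.mp ha
    obtain ⟨hb1, hb2⟩ := abs_lt.mp hb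
    have hr1 : betaFun U (sbar - ε') < r := by linarith
    have hr2 : r < betaFun U (sbar + ε') := by linarith
    have hβnn : 0 ≤ betaFun U (sbar - ε') := ENNReal.toReal_nonneg
    obtain ⟨s₀, hs₀mem, hs₀⟩ := intermediate_value_Icc
      (show (0:ℝ) ≤ sbar + ε' by linarith) hcont.continuousOn
      (Set.mem_Icc.2 ⟨by rw [hβ0]; linarith, hr2.le⟩)
    have hs₀S : s₀ ∈ Set.Icc 0 S := ⟨hs₀mem.1, hs₀mem.2.trans (by linarith)⟩
    have hub : alphaFun U S r ≤ s₀ :=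
      csInf_le ⟨0, fun x hx => hx.1.1⟩ ⟨hs₀S, hs₀⟩
    have hlb : sbar - ε' ≤ alphaFun U S r := by
      refine le_csInf ⟨s₀, hs₀S, hs₀⟩ ?_
      intro x hx
      by_contra h
      push_neg at h
      have : betaFun U x ≤ betaFun U (sbar - ε') := hmono h.le
      rw [hx.2] at this
      linarith
    rw [Real.dist_eq, abs_lt]
    constructor <;> nlinarith [hs₀mem.2]
  -- local left inverse
  have hfg : ∀ᶠ y in nhds rbar, betaFun U (alphaFun U S y) = y := by
    filter_upwards [isOpen_Ioo.mem_nhds (Set.mem_Ioo.2 ⟨hr0, hrR⟩)] with y hy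
    exact (hsol y hy).2
  have hd : HasDerivAt (betaFun U) 1 (alphaFun U S rbar) := hsbar ▸ hderiv
  have hfinal := HasDerivAt.of_local_left_inverse hacont hd one_ne_zero hfg
  simpa using hfinal.hasDerivWithinAt
end
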